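/- arXiv:2209.03897 — 5 statements merged into one kernel-verified Lean document; each statement's English description precedes it below -/
import Mathlib

section
/- Every injective graph embedding of a locally finite connected graph into itself that fixes a vertex (or fixes an edge setwise) is surjective, hence an automorphism. -/
open SimpleGraph Set

private lemma ball_finite {V : Type*} (G : SimpleGraph V)
    (hconn : G.Connected) (hlf : ∀ v, (G.neighborSet v).Finite) (w : V) :
    ∀ n : ℕ, {x : V | G.dist x w ≤ n}.Finite := by
  intro n
  induction n with
  | zero =>
    apply Set.Finite.subset (Set.finite_singleton w)
    intro x hx
    simp only [Set.mem_setOf_eq, Nat.le_zero] at hx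
    exact ((hconn.dist_eq_zero_iff).mp hx)
  | succ n ih =>
    apply Set.Finite.subset (ih.biUnion (fun y _ => (hlf y).insert y))
    intro x hx
    simp only [Set.mem_setOf_eq] at hx
    obtain ⟨p, hp⟩ := (hconn x w).exists_walk_length_eq_dist
    cases p with
    | nil =>
      refine Set.mem_biUnion (show G.dist w w ≤ n by simp [SimpleGraph.dist_self]) (Set.mem_insert _ _)
    | cons h q =>
      rename_i y
      have hy : G.dist y w ≤ n := by
        have := SimpleGraph.dist_le q
        simp [SimpleGraph.Walk.length_cons] at hp
        omega
      exact Set.mem_biUnion hy (Set.mem_insert_of_mem _ (by simpa using h.symm))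

private lemma aux_surj {V : Type*} (G : SimpleGraph V)
    (hconn : G.Connected) (hlf : ∀ v, (G.neighborSet v).Finite)
    (f : G →g G) (hf : Function.Injective f) {w : V} (hw : f w = w) :
    Function.Surjective f := by
  have hdist : ∀ x y : V, G.dist (f x) (f y) ≤ G.dist x y := by
    intro x y
    obtain ⟨p, hp⟩ := (hconn x y).exists_walk_length_eq_dist
    calc G.dist (f x) (f y) ≤ (p.map f).length := SimpleGraph.dist_le _
      _ = G.dist x y := by rw [SimpleGraph.Walk.length_map, hp]
  intro y
  set n := G.dist y w with hn
  set B : Set V := {x : V | G.dist x w ≤ n} with hB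
  have hBfin : B.Finite := ball_finite G hconn hlf w n
  have hmaps : Set.MapsTo f B B := by
    intro x hx
    simp only [hB, Set.mem_setOf_eq] at hx ⊢
    calc G.dist (f x) w = G.dist (f x) (f w) := by rw [hw]
      _ ≤ G.dist x w := hdist x w
      _ ≤ n := hx
  have hbij : Set.BijOn f B B :=
    (hBfin.injOn_iff_bijOn_of_mapsTo hmaps).mp hf.injOn
  obtain ⟨x, -, hx⟩ := hbij.surjOn (show y ∈ B from le_refl n)
  exact ⟨x, hx⟩

/-- Halin: every elliptic embedding (one fixing a vertex, or fixing an edge setwise)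
of a locally finite connected graph is surjective, hence an automorphism. -/
theorem stmt_3 {V : Type*} (G : SimpleGraph V)
    (hconn : G.Connected) (hlf : ∀ v, (G.neighborSet v).Finite)
    (f : G →g G) (hf : Function.Injective f)
    (hfix : (∃ v, f v = v) ∨
      (∃ u v, G.Adj u v ∧ ((f u = u ∧ f v = v) ∨ (f u = v ∧ f v = u)))) :
    Function.Surjective f := by
  -- In all cases, f ∘ f fixes some vertex.
  obtain ⟨w, hw⟩ : ∃ w, f (f w) = w := by
    rcases hfix with ⟨v, hv⟩ | ⟨u, v, -, ⟨hu, hv⟩ | ⟨hu, hv⟩⟩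
    · exact ⟨v, by rw [hv, hv]⟩
    · exact ⟨u, by rw [hu, hu]⟩
    · exact ⟨u, by rw [hu, hv]⟩
  have h2 : Function.Surjective (f.comp f) :=
    aux_surj G hconn hlf (f.comp f) (hf.comp hf) (w := w) hw
  intro y
  obtain ⟨x, hx⟩ := h2 y
  exact ⟨f x, hx⟩
end

section
/- If every self-embedding of a locally finite tree T is surjective (an automorphism), then T has exactly one sibling up to isomorphism: every tree equimorphic with T is isomorphic to T. -/
/-- If every self-embedding of a locally finite tree `G` is surjective, then every
tree equimorphic with `G` is isomorphic to `G` (G has exactly one sibling). -/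
theorem stmt_5 {V W : Type*} (G : SimpleGraph V) (H : SimpleGraph W)
    (hG : G.IsTree) (hlf : ∀ v, (G.neighborSet v).Finite)
    (hsurj : ∀ f : G →g G, Function.Injective f → Function.Surjective f)
    (hH : H.IsTree)
    (f : G →g H) (hf : Function.Injective f)
    (g : H →g G) (hg : Function.Injective g) :
    Nonempty (G ≃g H) := by
  have hgf : Function.Surjective (g.comp f) := hsurj (g.comp f) (by
    intro a b hab
    exact hf (hg hab))
  have hgs : Function.Surjective g := by
    intro v
    obtain ⟨w, hw⟩ := hgf v
    exact ⟨f w, hw⟩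
  have hbij : Function.Bijective g := ⟨hg, hgs⟩
  have hrefl : ∀ a b : W, G.Adj (g a) (g b) → H.Adj a b := by
    classical
    intro a b hadj
    obtain ⟨p⟩ := hH.isConnected.preconnected a b
    have hmap : (p.toPath.1.map g).IsPath := SimpleGraph.Walk.map_isPath_of_injective hg p.toPath.2
    have huniq := (SimpleGraph.isAcyclic_iff_path_unique.mp hG.IsAcyclic)
      ⟨p.toPath.1.map g, hmap⟩ (SimpleGraph.Path.singleton hadj)
    have hlen : (p.toPath.1.map g).length = 1 := by
      have := congrArg (fun q : G.Path (g a) (g b) => q.1.length) huniq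
      simpa [SimpleGraph.Path.singleton] using this
    rw [SimpleGraph.Walk.length_map] at hlen
    exact SimpleGraph.Walk.adj_of_length_eq_one hlen
  refine ⟨(⟨Equiv.ofBijective g hbij, ?_⟩ : H ≃g G).symm⟩
  intro a b
  exact ⟨hrefl a b, fun h => g.map_adj h⟩
end

section
/- A locally finite tree T is nearly finite if and only if T does not contain a rake as a subtree. Equivalently: a locally finite tree has infinitely many vertices of degree at least 3 if and only if it contains a ray with infinitely many additional vertices each attached by an edge to distinct vertices of the ray. -/
/-
Root the tree at a vertex `u`. Since every vertex has finitely many children, König's pigeonhole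
argument yields a geodesic ray from `u` each of whose vertices has infinitely many vertices of
degree at least 3 among its descendants. If the ray stopped branching from some point on, the
descendants of a late ray vertex would all lie on the ray itself; hence infinitely many ray
vertices have degree at least 3. Acyclicity makes the predecessor the only neighbour of a ray
vertex that is not a child, so each of these vertices `v k` has a child other than `v (k + 1)`.
These children are the teeth: a tooth at `v k` lies at distance `k + 1` from `u`, so the teeth are
pairwise distinct and off the ray. Conversely, an interior ray vertex carrying a tooth
has three distinct neighbours.
-/

/-- A ray in a graph. -/
def IsRay {V : Type*} (G : SimpleGraph V) (r : ℕ → V) : Prop :=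
  Function.Injective r ∧ ∀ n, G.Adj (r n) (r (n + 1))

/-- The graph contains a rake as a subtree: a ray together with infinitely many
further vertices, each attached by an edge to a distinct vertex of the ray. -/
def HasRake {V : Type*} (G : SimpleGraph V) : Prop :=
  ∃ r : ℕ → V, IsRay G r ∧ ∃ t : ℕ → V, Function.Injective t ∧
    (∀ n, t n ∉ Set.range r) ∧ ∃ a : ℕ → ℕ, StrictMono a ∧ ∀ n, G.Adj (t n) (r (a n))

namespace SimpleGraph

variable {V : Type*} {G : SimpleGraph V}

lemma three_le_degree_of_adj {x a b c : V} [Fintype (G.neighborSet x)]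
    (ha : G.Adj x a) (hb : G.Adj x b) (hc : G.Adj x c)
    (hab : a ≠ b) (hac : a ≠ c) (hbc : b ≠ c) : 3 ≤ G.degree x := by
  classical
  rw [← card_neighborFinset_eq_degree]
  calc 3 = ({a, b, c} : Finset V).card :=
        (Finset.card_eq_three.mpr ⟨a, b, c, hab, hac, hbc, rfl⟩).symm
    _ ≤ _ := Finset.card_le_card <| by
      intro w hw
      simp only [Finset.mem_insert, Finset.mem_singleton] at hw
      rcases hw with rfl | rfl | rfl <;> simpa

lemma eq_or_eq_of_degree_le_two {x a b w : V} [Fintype (G.neighborSet x)]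
    (hdeg : G.degree x ≤ 2) (ha : G.Adj x a) (hb : G.Adj x b) (hab : a ≠ b)
    (hw : G.Adj x w) : w = a ∨ w = b := by
  by_contra! h
  have := three_le_degree_of_adj ha hb hw hab h.1.symm h.2.symm
  omega

lemma adj_sub_one {v : ℕ → V} (hadj : ∀ k, G.Adj (v k) (v (k + 1))) {k : ℕ} (hk : 0 < k) :
    G.Adj (v k) (v (k - 1)) := by
  simpa [Nat.sub_add_cancel hk] using (hadj (k - 1)).symm

/-- In a tree rooted at `u`, these are the descendants of `x`. -/
def descendants (G : SimpleGraph V) (u x : V) : Set V :=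
  {s | G.dist u s = G.dist u x + G.dist x s}

lemma Connected.exists_adj_mem_descendants (hc : G.Connected) {u x s : V}
    (hs : s ∈ G.descendants u x) (hne : x ≠ s) :
    ∃ y, G.Adj x y ∧ G.dist u y = G.dist u x + 1 ∧ s ∈ G.descendants u y ∧
      G.dist y s + 1 = G.dist x s := by
  obtain ⟨p, hp⟩ := hc.exists_walk_length_eq_dist x s
  cases p with
  | nil => exact absurd rfl hne
  | @cons _ y _ hxy q =>
    have hq : G.dist y s ≤ q.length := dist_le q
    have hxs : G.dist x s ≤ G.dist x y + G.dist y s := hc.dist_triangle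
    have hus : G.dist u s ≤ G.dist u y + G.dist y s := hc.dist_triangle
    have huy : G.dist u y ≤ G.dist u x + G.dist x y := hc.dist_triangle
    have h1 : G.dist x y = 1 := dist_eq_one_iff_adj.mpr hxy
    simp only [descendants, Set.mem_ofPred_eq, Walk.length_cons] at hs hp ⊢
    refine ⟨y, hxy, ?_, ?_, ?_⟩ <;> omega

lemma Connected.exists_adj_infinite_inter_descendants [G.LocallyFinite] (hc : G.Connected)
    {S : Set V} {u x : V} (hS : (S ∩ G.descendants u x).Infinite) :
    ∃ y, G.Adj x y ∧ G.dist u y = G.dist u x + 1 ∧ (S ∩ G.descendants u y).Infinite := by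
  by_contra! h
  let children := {y | G.Adj x y ∧ G.dist u y = G.dist u x + 1}
  have hchildren : children.Finite := (G.neighborSet x).toFinite.subset fun y hy => hy.1
  refine hS (((hchildren.biUnion fun y hy => h y hy.1 hy.2).insert x).subset ?_)
  rintro s ⟨hsS, hs⟩
  rcases eq_or_ne x s with rfl | hne
  · exact Set.mem_insert _ _
  obtain ⟨y, hxy, hy, hsy, -⟩ := hc.exists_adj_mem_descendants hs hne
  exact Set.mem_insert_of_mem _ (Set.mem_biUnion ⟨hxy, hy⟩ ⟨hsS, hsy⟩)

lemma Connected.exists_ray_infinite_inter_descendants [G.LocallyFinite] (hc : G.Connected)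
    {S : Set V} (hS : S.Infinite) (u : V) :
    ∃ v : ℕ → V, (∀ k, G.Adj (v k) (v (k + 1))) ∧ (∀ k, G.dist u (v k) = k) ∧
      ∀ k, (S ∩ G.descendants u (v k)).Infinite := by
  choose! next hadj hdist hnext using
    fun x (hx : (S ∩ G.descendants u x).Infinite) => hc.exists_adj_infinite_inter_descendants hx
  have hv : ∀ k, G.dist u (next^[k] u) = k ∧ (S ∩ G.descendants u (next^[k] u)).Infinite := by
    intro k
    induction k with
    | zero => simpa [descendants] using hS
    | succ k ih =>
      rw [Function.iterate_succ_apply']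
      exact ⟨by rw [hdist _ ih.2, ih.1], hnext _ ih.2⟩
  refine ⟨fun k => next^[k] u, fun k => ?_, fun k => (hv k).1, fun k => (hv k).2⟩
  simpa only [Function.iterate_succ_apply'] using hadj _ (hv k).2

lemma Connected.descendants_subset_range_of_unique_child (hc : G.Connected) {u : V}
    {v : ℕ → V} (hdist : ∀ k, G.dist u (v k) = k) {K : ℕ}
    (hchild : ∀ k ≥ K, ∀ w, G.Adj (v k) w → G.dist u w = k + 1 → w = v (k + 1)) :
    G.descendants u (v K) ⊆ Set.range v := by
  suffices ∀ d k, K ≤ k → ∀ s ∈ G.descendants u (v k), G.dist (v k) s = d →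
      s ∈ Set.range v from fun s hs => this _ K le_rfl s hs rfl
  intro d
  induction d with
  | zero =>
    intro k _ s _ hd
    exact ⟨k, hc.dist_eq_zero_iff.mp hd⟩
  | succ d ih =>
    intro k hk s hs hd
    obtain ⟨w, hw, hwd, hsw, hws⟩ :=
      hc.exists_adj_mem_descendants hs (fun h => by simp [h] at hd)
    rw [hdist] at hwd
    obtain rfl := hchild k hk w hw hwd
    exact ih (k + 1) (by omega) s hsw (by omega)

lemma Connected.infinite_setOf_three_le_degree_of_ray [G.LocallyFinite] (hc : G.Connected)
    {u : V} {v : ℕ → V} (hadj : ∀ k, G.Adj (v k) (v (k + 1)))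
    (hdist : ∀ k, G.dist u (v k) = k)
    (hdesc : ∀ k, ({w | 3 ≤ G.degree w} ∩ G.descendants u (v k)).Infinite) :
    {k | 3 ≤ G.degree (v k)}.Infinite := by
  have hinj : v.Injective := Function.LeftInverse.injective hdist
  refine Set.infinite_of_forall_exists_gt fun K => ?_
  by_contra! hK
  have hlow : ∀ k > K, G.degree (v k) ≤ 2 := fun k hk => by
    by_contra! h
    exact absurd (hK k h) (by omega)
  have hchild : ∀ k ≥ K + 1, ∀ w, G.Adj (v k) w → G.dist u w = k + 1 → w = v (k + 1) := by
    intro k hk w hw hwd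
    have hne : v (k - 1) ≠ v (k + 1) := fun h => by have := hinj h; omega
    rcases eq_or_eq_of_degree_le_two (hlow k (by omega)) (adj_sub_one hadj (by omega)) (hadj k)
      hne hw with h | h
    · rw [h, hdist] at hwd; omega
    · exact h
  obtain ⟨s, hsdeg, hs⟩ := (hdesc (K + 1)).nonempty
  obtain ⟨m, rfl⟩ := hc.descendants_subset_range_of_unique_child hdist hchild hs
  have hm : m = K + 1 + G.dist (v (K + 1)) (v m) := by
    simpa only [descendants, hdist, Set.mem_ofPred_eq] using hs
  exact absurd (hK m hsdeg) (by omega)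

lemma IsAcyclic.eq_of_adj_of_dist_add_one_eq (hG : G.IsAcyclic) {u x y y' : V}
    (hy : G.Adj y x) (hy' : G.Adj y' x)
    (hdy : G.dist u y + 1 = G.dist u x) (hdy' : G.dist u y' + 1 = G.dist u x) : y = y' := by
  have hux : G.Reachable u x := Reachable.of_dist_ne_zero (by omega)
  obtain ⟨p, hp⟩ := (hux.trans hy.symm.reachable).exists_walk_length_eq_dist
  obtain ⟨p', hp'⟩ := (hux.trans hy'.symm.reachable).exists_walk_length_eq_dist
  have hq := (p.concat hy).isPath_of_length_eq_dist (by rw [Walk.length_concat, hp, hdy])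
  have hq' := (p'.concat hy').isPath_of_length_eq_dist (by rw [Walk.length_concat, hp', hdy'])
  have hpath := (hG.subsingleton_path u x).elim ⟨_, hq⟩ ⟨_, hq'⟩
  exact (Walk.concat_inj (congrArg Subtype.val hpath)).1

lemma IsAcyclic.exists_adj_dist_eq_add_one_ne (hG : G.IsAcyclic) {u x y : V} (z : V)
    [Fintype (G.neighborSet x)] (hdeg : 3 ≤ G.degree x) (hxy : G.Adj x y)
    (hdy : G.dist u y + 1 = G.dist u x) :
    ∃ t, G.Adj x t ∧ G.dist u t = G.dist u x + 1 ∧ t ≠ z := by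
  classical
  have hcard : 0 < (((G.neighborFinset x).erase y).erase z).card := by
    have := Finset.pred_card_le_card_erase (s := G.neighborFinset x) (a := y)
    have := Finset.pred_card_le_card_erase (s := (G.neighborFinset x).erase y) (a := z)
    rw [card_neighborFinset_eq_degree] at *
    omega
  obtain ⟨t, ht⟩ := Finset.card_pos.mp hcard
  simp only [Finset.mem_erase, mem_neighborFinset] at ht
  obtain ⟨htz, hty, hxt⟩ := ht
  refine ⟨t, hxt, ?_, htz⟩
  rcases hG.dist_eq_dist_add_one_of_adj_of_reachable u hxt
    (Reachable.of_dist_ne_zero (by omega)) with h | h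
  · exact absurd (hG.eq_of_adj_of_dist_add_one_eq hxt.symm hxy.symm h.symm hdy) hty
  · exact h

lemma IsAcyclic.hasRake_of_ray [G.LocallyFinite] (hG : G.IsAcyclic) {u : V} {v : ℕ → V}
    (hadj : ∀ k, G.Adj (v k) (v (k + 1))) (hdist : ∀ k, G.dist u (v k) = k)
    (hbranch : {k | 3 ≤ G.degree (v k)}.Infinite) : HasRake G := by
  have hinj : v.Injective := Function.LeftInverse.injective hdist
  have hpos : {k | 0 < k ∧ 3 ≤ G.degree (v k)}.Infinite := by
    refine (hbranch.sdiff (Set.finite_singleton 0)).mono ?_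
    rintro k ⟨hk, hk0⟩
    exact ⟨Nat.pos_of_ne_zero hk0, hk⟩
  set a := Nat.nth fun k => 0 < k ∧ 3 ≤ G.degree (v k)
  have ha : ∀ n, 0 < a n ∧ 3 ≤ G.degree (v (a n)) := Nat.nth_mem_of_infinite hpos
  have htooth : ∀ n, ∃ t, G.Adj (v (a n)) t ∧ G.dist u t = a n + 1 ∧ t ≠ v (a n + 1) := by
    intro n
    obtain ⟨t, hxt, htd, htne⟩ := hG.exists_adj_dist_eq_add_one_ne (v (a n + 1)) (ha n).2
      (adj_sub_one hadj (ha n).1) (by rw [hdist, hdist]; have := (ha n).1; omega)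
    exact ⟨t, hxt, by rw [htd, hdist], htne⟩
  choose t ht htd htne using htooth
  refine ⟨v, ⟨hinj, hadj⟩, t, fun n m h => (Nat.nth_strictMono hpos).injective ?_,
    ?_, a, Nat.nth_strictMono hpos, fun n => (ht n).symm⟩
  · simpa [htd] using congrArg (G.dist u) h
  · rintro n ⟨m, hm⟩
    have : m = a n + 1 := by rw [← hdist m, hm, htd]
    exact htne n (by rw [← hm, this])

end SimpleGraph

open SimpleGraph

lemma HasRake.infinite_setOf_three_le_degree {V : Type*} {G : SimpleGraph V}
    [G.LocallyFinite] (h : HasRake G) : {v | 3 ≤ G.degree v}.Infinite := by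
  obtain ⟨r, ⟨hrinj, hradj⟩, t, -, htr, a, ha, hta⟩ := h
  refine Set.infinite_of_injective_forall_mem (f := fun n => r (a (n + 1)))
    (fun i j hij => by simpa using ha.injective (hrinj hij)) fun n => ?_
  have hpos : 0 < a (n + 1) := (Nat.zero_le _).trans_lt (ha (Nat.zero_lt_succ n))
  exact three_le_degree_of_adj (adj_sub_one hradj hpos) (hradj _) (hta (n + 1)).symm
    (fun h => by have := hrinj h; omega) (fun h => htr _ ⟨_, h⟩) (fun h => htr _ ⟨_, h⟩)

/-- A locally finite tree fails to be nearly finite (has infinitely many vertices of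
degree at least 3) if and only if it contains a rake as a subtree. -/
theorem stmt_6 {V : Type*} (G : SimpleGraph V) (hG : G.IsTree)
    [∀ v, Fintype (G.neighborSet v)] :
    {v : V | 3 ≤ G.degree v}.Infinite ↔ HasRake G := by
  refine ⟨fun hS => ?_, HasRake.infinite_setOf_three_le_degree⟩
  obtain ⟨u, -⟩ := hS.nonempty
  obtain ⟨v, hadj, hdist, hdesc⟩ := hG.connected.exists_ray_infinite_inter_descendants hS u
  exact hG.isAcyclic.hasRake_of_ray hadj hdist
    (hG.connected.infinite_setOf_three_le_degree_of_ray hadj hdist hdesc)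
end

section
/- Let T be a locally finite tree and f a self-embedding of T preserving forward a ray R = r₁r₂⋯ with f(r₁) = r_m, m > 1. If the rooted branches T^f_r for r ∈ R fall into infinitely many isomorphism classes (R is non-regular), then there exist infinitely many indices k and vertices s_k <_f t_k on R with f(s_k) = t_k and T^f_{s_k} not isomorphic to T^f_{t_k}, and consequently T ∖ f(T) has infinitely many components. -/
/-- The branch of the tree at the vertex `r i` of the ray `r`: the maximal subtree
containing `r i` and edge-disjoint from the ray. -/
def BranchAt {V : Type*} (G : SimpleGraph V) (r : ℕ → V) (i : ℕ) : Set V :=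
  {v | ∀ j, G.dist v (r j) = G.dist v (r i) + G.dist (r i) (r j)}

lemma root_mem_branchAt {V : Type*} (G : SimpleGraph V) (r : ℕ → V) (i : ℕ) :
    r i ∈ BranchAt G r i := by
  intro j
  simp [SimpleGraph.dist_self]

/-- The branches at `r i` and `r j`, rooted at `r i` and `r j`, are isomorphic. -/
def RootedIso {V : Type*} (G : SimpleGraph V) (r : ℕ → V) (i j : ℕ) : Prop :=
  ∃ e : (G.induce (BranchAt G r i)) ≃g (G.induce (BranchAt G r j)),
    (e ⟨r i, root_mem_branchAt G r i⟩ : V) = r j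

namespace SimpleGraph

variable {V : Type*} {G : SimpleGraph V}

lemma IsAcyclic.length_eq_dist (hG : G.IsAcyclic) {u v : V} {p : G.Walk u v} (hp : p.IsPath) :
    p.length = G.dist u v := by
  obtain ⟨q, hq, hql⟩ := p.reachable.exists_path_of_dist
  have hpq : p = q := congrArg Subtype.val ((hG.subsingleton_path u v).elim ⟨p, hp⟩ ⟨q, hq⟩)
  rw [hpq, hql]

lemma IsAcyclic.dist_map_of_injective {V' : Type*} {G' : SimpleGraph V'} (hG : G.Connected)
    (hG' : G'.IsAcyclic) {f : G →g G'} (hf : Function.Injective f) (u v : V) :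
    G'.dist (f u) (f v) = G.dist u v := by
  obtain ⟨q, hq, hql⟩ := hG.exists_path_of_dist u v
  rw [← hql, ← hG'.length_eq_dist (hq.map hf), Walk.length_map]

namespace IsTree

variable (hG : G.IsTree)
include hG

lemma dist_add_dist_of_mem_support {u v x : V} {p : G.Walk u v} (hp : p.IsPath)
    (hx : x ∈ p.support) : G.dist u x + G.dist x v = G.dist u v := by
  classical
  have h := congrArg Walk.length (p.take_spec hx)
  rwa [Walk.length_append, hG.isAcyclic.length_eq_dist (hp.takeUntil hx),
    hG.isAcyclic.length_eq_dist (hp.dropUntil hx), hG.isAcyclic.length_eq_dist hp] at h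

lemma mem_support_of_dist_add_dist {u v x : V} {p : G.Walk u v} (hp : p.IsPath)
    (hd : G.dist u x + G.dist x v = G.dist u v) : x ∈ p.support := by
  obtain ⟨q₁, -, hl₁⟩ := hG.connected.exists_path_of_dist u x
  obtain ⟨q₂, -, hl₂⟩ := hG.connected.exists_path_of_dist x v
  have hq : (q₁.append q₂).IsPath :=
    (q₁.append q₂).isPath_of_length_eq_dist (by rw [Walk.length_append, hl₁, hl₂, hd])
  have hqp : q₁.append q₂ = p :=
    congrArg Subtype.val ((hG.isAcyclic.subsingleton_path u v).elim ⟨_, hq⟩ ⟨p, hp⟩)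
  rw [← hqp, Walk.mem_support_append_iff]
  exact Or.inl q₁.end_mem_support

/-- An edge leaving the set of vertices `x` whose geodesic to `c'` passes through `c` starts
at `c`. -/
lemma eq_of_adj_of_dist_add_dist {a b c c' : V} (hab : G.Adj a b)
    (ha : G.dist a c + G.dist c c' = G.dist a c')
    (hb : G.dist b c + G.dist c c' ≠ G.dist b c') : a = c := by
  classical
  obtain ⟨q, hq, -⟩ := hG.connected.exists_path_of_dist b c'
  have hcq : c ∉ q.support := fun hc => hb (hG.dist_add_dist_of_mem_support hq hc)
  by_cases haq : a ∈ q.support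
  · exact absurd (Walk.support_dropUntil_subset_support _ _
      (hG.mem_support_of_dist_add_dist (hq.dropUntil haq) ha)) hcq
  · have hc := hG.mem_support_of_dist_add_dist (hq.cons haq (h := hab)) ha
    rw [Walk.support_cons, List.mem_cons] at hc
    exact (hc.resolve_right hcq).symm

lemma mem_support_of_dist_add_dist_ne {a b c c' : V} (W : G.Walk a b)
    (ha : G.dist a c + G.dist c c' = G.dist a c')
    (hb : G.dist b c + G.dist c c' ≠ G.dist b c') : c ∈ W.support := by
  obtain ⟨d, hd, hdS, hdS'⟩ :=
    W.exists_boundary_dart {x | G.dist x c + G.dist c c' = G.dist x c'} ha hb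
  rw [← hG.eq_of_adj_of_dist_add_dist d.adj hdS hdS']
  exact W.dart_fst_mem_support_of_mem_darts hd

/-- Otherwise `x` and `z` would both be the second vertex of the unique path from `y` to `v`. -/
lemma dist_add_one_of_adj_of_dist_add_one {v x y z : V} (hxy : G.Adj x y) (hyz : G.Adj y z)
    (hxz : x ≠ z) (h : G.dist v x + 1 = G.dist v y) : G.dist v y + 1 = G.dist v z := by
  refine ((hG.dist_eq_dist_add_one_of_adj v hyz).resolve_left fun h' => hxz ?_).symm
  obtain ⟨qx, -, hqx⟩ := hG.connected.exists_path_of_dist x v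
  obtain ⟨qz, -, hqz⟩ := hG.connected.exists_path_of_dist z v
  have hx : (Walk.cons hxy.symm qx).IsPath := Walk.isPath_of_length_eq_dist _ (by
    rw [Walk.length_cons, hqx, dist_comm, h, dist_comm])
  have hz : (Walk.cons hyz qz).IsPath := Walk.isPath_of_length_eq_dist _ (by
    rw [Walk.length_cons, hqz, dist_comm, ← h', dist_comm])
  have hxz' := congrArg (fun q : G.Path y v => q.1.snd)
    ((hG.isAcyclic.subsingleton_path y v).elim ⟨_, hx⟩ ⟨_, hz⟩)
  simpa only [Walk.snd_cons] using hxz'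

end IsTree

end SimpleGraph

lemma Nat.eq_add_dist_of_forall_le {g : ℕ → ℕ}
    (hstep : ∀ n, g n = g (n + 1) + 1 ∨ g (n + 1) = g n + 1)
    (hconvex : ∀ n, g n + 1 = g (n + 1) → g (n + 1) + 1 = g (n + 2))
    {l : ℕ} (hl : ∀ n, g l ≤ g n) (j : ℕ) : g j = g l + Nat.dist l j := by
  have hup : ∀ n, l ≤ n → g n + 1 = g (n + 1) := by
    intro n hn
    induction n, hn using Nat.le_induction with
    | base => have := hl (l + 1); have := hstep l; omega
    | succ n _ ih => exact hconvex n ih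
  have hdown : ∀ n, n < l → g n = g (n + 1) + 1 := by
    intro n hn
    refine (hstep n).resolve_right fun h => ?_
    have hlast : g (l - 1) + 1 = g (l - 1 + 1) :=
      Nat.le_induction h.symm (fun m _ ih => hconvex m ih) (l - 1) (by omega)
    rw [Nat.sub_add_cancel (by omega)] at hlast
    have := hl (l - 1)
    omega
  unfold Nat.dist
  rcases le_total l j with h | h
  · obtain ⟨k, rfl⟩ := Nat.exists_eq_add_of_le h
    induction k with
    | zero => simp
    | succ k ih => rw [← add_assoc, ← hup _ (by omega), ih (by omega)]; omega
  · obtain ⟨k, rfl⟩ := Nat.exists_eq_add_of_le h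
    suffices ∀ i ≤ k, g j = g (j + i) + i by have := this k le_rfl; omega
    intro i hi
    induction i with
    | zero => simp
    | succ i ih => rw [ih (by omega), ← add_assoc j i 1, hdown (j + i) (by omega)]; omega

open SimpleGraph

section Ray

variable {V : Type*} {G : SimpleGraph V} {r : ℕ → V}

lemma IsRay.dist_eq_add_dist_of_forall_le (hG : G.IsTree) (hr : IsRay G r) {v : V} {l : ℕ}
    (hl : ∀ n, G.dist v (r l) ≤ G.dist v (r n)) (j : ℕ) :
    G.dist v (r j) = G.dist v (r l) + Nat.dist l j :=
  Nat.eq_add_dist_of_forall_le (fun n => hG.dist_eq_dist_add_one_of_adj v (hr.2 n))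
    (fun n => hG.dist_add_one_of_adj_of_dist_add_one (hr.2 n) (hr.2 (n + 1))
      (hr.1.ne (by omega))) hl j

lemma IsRay.dist_apply (hG : G.IsTree) (hr : IsRay G r) (i j : ℕ) :
    G.dist (r i) (r j) = Nat.dist i j := by
  simpa using hr.dist_eq_add_dist_of_forall_le hG (v := r i) (l := i) (by simp) j

lemma mem_branchAt_iff (hG : G.IsTree) (hr : IsRay G r) {v : V} {i : ℕ} :
    v ∈ BranchAt G r i ↔ ∀ j, G.dist v (r j) = G.dist v (r i) + Nat.dist i j := by
  simp only [BranchAt, Set.mem_ofPred_eq, hr.dist_apply hG]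

lemma exists_mem_branchAt (hG : G.IsTree) (hr : IsRay G r) (v : V) :
    ∃ l, v ∈ BranchAt G r l := by
  obtain ⟨l, hl⟩ : ∃ l, ∀ n, G.dist v (r l) ≤ G.dist v (r n) :=
    ⟨_, fun n => Function.argmin_le (fun m => G.dist v (r m)) n⟩
  exact ⟨l, (mem_branchAt_iff hG hr).2 (hr.dist_eq_add_dist_of_forall_le hG hl)⟩

lemma eq_of_mem_branchAt (hG : G.IsTree) (hr : IsRay G r) {v : V} {i j : ℕ}
    (hi : v ∈ BranchAt G r i) (hj : v ∈ BranchAt G r j) : i = j := by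
  have h₁ := (mem_branchAt_iff hG hr).1 hi j
  have h₂ := (mem_branchAt_iff hG hr).1 hj i
  unfold Nat.dist at h₁ h₂
  omega

lemma mem_support_of_mem_branchAt (hG : G.IsTree) (hr : IsRay G r) {k k' : ℕ} (hk : k < k')
    {a b : V} (ha : a ∈ BranchAt G r k) (hb : b ∈ BranchAt G r k') (W : G.Walk a b) :
    r k ∈ W.support := by
  refine hG.mem_support_of_dist_add_dist_ne W (c' := r k') (ha k').symm fun h => ?_
  have hb' := hb k
  rw [hr.dist_apply hG] at h hb'
  unfold Nat.dist at h hb'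
  omega

lemma infinite_connectedComponent_induce_of_branchAt (hG : G.IsTree) (hr : IsRay G r) {s : Set V}
    (hs : {k | r k ∉ s ∧ (BranchAt G r k ∩ s).Nonempty}.Infinite) :
    Infinite (G.induce s).ConnectedComponent := by
  set K := {k | r k ∉ s ∧ (BranchAt G r k ∩ s).Nonempty}
  choose w hw using fun k : K => k.2.2
  have hne : ∀ k k' : K, k.1 < k'.1 →
      (G.induce s).connectedComponentMk ⟨w k, (hw k).2⟩ ≠
        (G.induce s).connectedComponentMk ⟨w k', (hw k').2⟩ := by
    intro k k' hkk' heq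
    obtain ⟨W⟩ := ConnectedComponent.eq.1 heq
    have hmem : r k ∈ (W.map (Embedding.induce s).toHom).support :=
      mem_support_of_mem_branchAt hG hr hkk' (hw k).1 (hw k').1 _
    rw [Walk.support_map, List.mem_map] at hmem
    obtain ⟨u, -, hu⟩ := hmem
    exact k.2.1 (hu ▸ u.2)
  have : Infinite K := hs.to_subtype
  refine Infinite.of_injective (fun k : K => (G.induce s).connectedComponentMk ⟨w k, (hw k).2⟩)
    fun k k' h => ?_
  rcases lt_trichotomy k.1 k'.1 with hlt | heq | hgt
  · exact absurd h (hne k k' hlt)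
  · exact Subtype.ext heq
  · exact absurd h.symm (hne k' k hgt)

end Ray

section Embedding

variable {V : Type*} {G : SimpleGraph V} {r : ℕ → V} {f : G →g G} {p : ℕ}

lemma map_mem_branchAt (hG : G.IsTree) (hr : IsRay G r) (hf : Function.Injective f)
    (hshift : ∀ i, f (r i) = r (i + p)) {k : ℕ} (hk : 1 ≤ k) {v : V}
    (hv : v ∈ BranchAt G r k) : f v ∈ BranchAt G r (k + p) := by
  have hfv : ∀ j, G.dist (f v) (r (j + p)) = G.dist v (r j) := fun j => by
    rw [← hshift, hG.isAcyclic.dist_map_of_injective hG.connected hf]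
  obtain ⟨l, hl⟩ := exists_mem_branchAt hG hr (f v)
  have hlk : l = k + p := by
    rw [mem_branchAt_iff hG hr] at hv hl
    have := hfv 0; have := hfv k; have := hfv (l - p)
    have := hv 0; have := hv k; have := hv (l - p)
    have := hl p; have := hl (k + p); have := hl (l - p + p)
    unfold Nat.dist at *
    omega
  rwa [← hlk]

lemma mem_branchAt_of_map_mem (hG : G.IsTree) (hr : IsRay G r) (hf : Function.Injective f)
    (hshift : ∀ i, f (r i) = r (i + p)) {k : ℕ} (hk : 1 ≤ k) {v : V}
    (hv : f v ∈ BranchAt G r (k + p)) : v ∈ BranchAt G r k := by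
  obtain ⟨l, hl⟩ := exists_mem_branchAt hG hr v
  obtain rfl | hl₁ := Nat.eq_zero_or_pos l
  · exfalso
    have hfv : ∀ j, G.dist (f v) (r (j + p)) = G.dist v (r j) := fun j => by
      rw [← hshift, hG.isAcyclic.dist_map_of_injective hG.connected hf]
    rw [mem_branchAt_iff hG hr] at hv hl
    have h₀ : G.dist (f v) (r p) = G.dist v (r 0) := by simpa using hfv 0
    have := hfv k; have := hl k; have := hv p; have := hv (k + p)
    unfold Nat.dist at *
    omega
  · have hlk := eq_of_mem_branchAt hG hr (map_mem_branchAt hG hr hf hshift hl₁ hl) hv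
    rwa [Nat.add_right_cancel hlk] at hl

lemma rootedIso_of_branchAt_subset_range (hG : G.IsTree) (hr : IsRay G r)
    (hf : Function.Injective f) (hshift : ∀ i, f (r i) = r (i + p)) {k : ℕ} (hk : 1 ≤ k)
    (hsub : BranchAt G r (k + p) ⊆ Set.range f) : RootedIso G r k (k + p) := by
  have hbij : Function.Bijective
      (fun v : BranchAt G r k => (⟨f v, map_mem_branchAt hG hr hf hshift hk v.2⟩ :
        BranchAt G r (k + p))) := by
    refine ⟨fun a b hab => Subtype.ext (hf (congrArg Subtype.val hab)), fun ⟨w, hw⟩ => ?_⟩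
    obtain ⟨v, rfl⟩ := hsub hw
    exact ⟨⟨v, mem_branchAt_of_map_mem hG hr hf hshift hk hw⟩, rfl⟩
  refine ⟨⟨Equiv.ofBijective _ hbij, fun {a b} => ?_⟩, hshift k⟩
  change G.Adj (f a) (f b) ↔ G.Adj a b
  rw [← dist_eq_one_iff_adj, ← dist_eq_one_iff_adj,
    hG.isAcyclic.dist_map_of_injective hG.connected hf]

end Embedding

namespace RootedIso

variable {V : Type*} {G : SimpleGraph V} {r : ℕ → V} {i j k : ℕ}

lemma refl (i : ℕ) : RootedIso G r i i :=
  ⟨Iso.refl, rfl⟩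

lemma symm (h : RootedIso G r i j) : RootedIso G r j i := by
  obtain ⟨e, he⟩ := h
  refine ⟨e.symm, ?_⟩
  rw [← show e ⟨r i, root_mem_branchAt G r i⟩ = ⟨r j, root_mem_branchAt G r j⟩ from
    Subtype.ext he, RelIso.symm_apply_apply]

lemma trans (h₁ : RootedIso G r i j) (h₂ : RootedIso G r j k) : RootedIso G r i k := by
  obtain ⟨e₁, he₁⟩ := h₁
  obtain ⟨e₂, he₂⟩ := h₂
  refine ⟨e₁.trans e₂, ?_⟩
  change (e₂ (e₁ _) : V) = r k
  rwa [show e₁ ⟨r i, root_mem_branchAt G r i⟩ = ⟨r j, root_mem_branchAt G r j⟩ from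
    Subtype.ext he₁]

end RootedIso

/-- If all but finitely many branches are isomorphic to the branch `p` steps further, every branch
is isomorphic to one of a fixed initial segment. -/
lemma infinite_setOf_not_rootedIso {V : Type*} {G : SimpleGraph V} {r : ℕ → V} {p : ℕ}
    (hp : 1 ≤ p) (hnonreg : ¬ ∃ s : Finset ℕ, ∀ i, ∃ j ∈ s, RootedIso G r i j) :
    {i | ¬ RootedIso G r i (i + p)}.Infinite := by
  intro hfin
  obtain ⟨N, hN⟩ := hfin.bddAbove
  refine hnonreg ⟨Finset.range (N + p + 1), fun i => ?_⟩
  induction i using Nat.strong_induction_on with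
  | _ i ih =>
    by_cases hi : i ≤ N + p
    · exact ⟨i, Finset.mem_range.2 (by omega), RootedIso.refl i⟩
    · obtain ⟨j, hj, hij⟩ := ih (i - p) (by omega)
      have hstep : RootedIso G r (i - p) (i - p + p) := by
        by_contra h
        have := hN h
        omega
      rw [Nat.sub_add_cancel (by omega)] at hstep
      exact ⟨j, hj, hstep.symm.trans hij⟩

theorem stmt_13_general {V : Type*} (G : SimpleGraph V)
    (hG : G.IsTree)
    (r : ℕ → V) (hr : IsRay G r)
    (f : G →g G) (hf : Function.Injective f)
    (p : ℕ) (hp : 1 ≤ p) (hshift : ∀ i, f (r i) = r (i + p))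
    (hnonreg : ¬ ∃ s : Finset ℕ, ∀ i, ∃ j ∈ s, RootedIso G r i j) :
    (∃ idx : ℕ → ℕ, StrictMono idx ∧ ∀ k, ¬ RootedIso G r (idx k) (idx k + p)) ∧
    Infinite ((G.induce ((Set.range ⇑f)ᶜ : Set V)).ConnectedComponent) := by
  have hS := infinite_setOf_not_rootedIso hp hnonreg
  refine ⟨⟨Nat.nth _, Nat.nth_strictMono hS, Nat.nth_mem_of_infinite hS⟩, ?_⟩
  refine infinite_connectedComponent_induce_of_branchAt hG hr
    (Set.infinite_of_forall_exists_gt fun N => ?_)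
  obtain ⟨k, hk, hNk⟩ := hS.exists_gt N
  refine ⟨k + p, ⟨fun h => h ⟨r k, hshift k⟩, Set.inter_compl_nonempty_iff.2 fun hsub => ?_⟩,
    by omega⟩
  exact hk (rootedIso_of_branchAt_subset_range hG hr hf hshift (by omega) hsub)

/-- If a self-embedding `f` of a locally finite tree translates a ray `r` forward by
`p ≥ 1` and the rooted branches along `r` fall into infinitely many isomorphism
classes, then there are infinitely many positions `s_k <_f t_k = f(s_k)` on the ray
whose branches are non-isomorphic, and `T ∖ f(T)` has infinitely many components. -/
theorem stmt_13 {V : Type*} (G : SimpleGraph V)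
    (hG : G.IsTree) (hlf : ∀ v, (G.neighborSet v).Finite)
    (r : ℕ → V) (hr : IsRay G r)
    (f : G →g G) (hf : Function.Injective f)
    (p : ℕ) (hp : 1 ≤ p) (hshift : ∀ i, f (r i) = r (i + p))
    (hnonreg : ¬ ∃ s : Finset ℕ, ∀ i, ∃ j ∈ s, RootedIso G r i j) :
    (∃ idx : ℕ → ℕ, StrictMono idx ∧ ∀ k, ¬ RootedIso G r (idx k) (idx k + p)) ∧
    Infinite ((G.induce ((Set.range ⇑f)ᶜ : Set V)).ConnectedComponent) :=
  stmt_13_general G hG r hr f hf p hp hshift hnonreg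
end

section
/- Let T be a locally finite tree with a parabolic self-embedding f and maximal preserved ray R_f, all of whose branches T^f_r are nearly finite, and suppose a ray R ⊆ R_f with starting vertex r_t is preserved by every embedding of T. Define S_k to be T with the branches T^f_{f(s)}, …, T^f_{f^k(s)} replaced by single vertices, where s is the <_f-minimal vertex of R_f of degree ≥ 3. Then each S_k is a sibling of T and T ⊋ S₁ ⊋ S₂ ⊋ ⋯ is a strictly decreasing chain of siblings of T. -/
/-- A set of vertices is (the vertex set of) a ray. -/
def IsRaySet {V : Type*} (G : SimpleGraph V) (s : Set V) : Prop :=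
  ∃ r : ℕ → V, IsRay G r ∧ Set.range r = s

/-- Two rays are equivalent (belong to the same end) if their intersection is a ray. -/
def RayEquiv {V : Type*} (G : SimpleGraph V) (r₁ r₂ : ℕ → V) : Prop :=
  IsRaySet G (Set.range r₁ ∩ Set.range r₂)

/-- A self-embedding is elliptic if it fixes a nonempty finite subtree setwise. -/
def Elliptic {V : Type*} (G : SimpleGraph V) (f : G →g G) : Prop :=
  ∃ s : Set V, s.Nonempty ∧ s.Finite ∧ (G.induce s).Connected ∧ ⇑f '' s = s

/-- `f` fixes the end of the ray `ρ`: the image ray is equivalent to `ρ`. -/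
def FixesEnd {V : Type*} (G : SimpleGraph V) (f : G →g G) (ρ : ℕ → V) : Prop :=
  RayEquiv G (⇑f ∘ ρ) ρ

/-- A self-embedding is parabolic if it is not elliptic and fixes exactly one end. -/
def Parabolic {V : Type*} (G : SimpleGraph V) (f : G →g G) : Prop :=
  ¬ Elliptic G f ∧ ∃ ρ : ℕ → V, IsRay G ρ ∧ FixesEnd G f ρ ∧
    ∀ ρ' : ℕ → V, IsRay G ρ' → FixesEnd G f ρ' → RayEquiv G ρ ρ'

/-- `r` is the maximal ray mapped (properly) into itself by `f`. -/
def IsMaxPreservedRay {V : Type*} (G : SimpleGraph V) (f : G →g G) (r : ℕ → V) : Prop :=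
  IsRay G r ∧ ⇑f '' Set.range r ⊂ Set.range r ∧
    ∀ r' : ℕ → V, IsRay G r' → ⇑f '' Set.range r' ⊆ Set.range r' →
      Set.range r' ⊆ Set.range r

/-- The branch of the tree at a vertex `v` of the ray `r`. -/
def BranchAtVtx {V : Type*} (G : SimpleGraph V) (r : ℕ → V) (v : V) : Set V :=
  {u | ∀ j, G.dist u (r j) = G.dist u v + G.dist v (r j)}

/-- The vertex set of the sibling `S_k`: `T` with the branches at
`f(s), …, f^k(s)` replaced by the single vertices `f(s), …, f^k(s)`. -/
def SkSet {V : Type*} (G : SimpleGraph V) (f : V → V) (r : ℕ → V) (s : V) (k : ℕ) :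
    Set V :=
  (⋃ j ∈ Finset.Icc 1 k, (BranchAtVtx G r (f^[j] s) \ {f^[j] s}))ᶜ

/-- Two graphs are equimorphic (siblings) if each embeds into the other. -/
def Equimorphic {V W : Type*} (G : SimpleGraph V) (H : SimpleGraph W) : Prop :=
  (∃ f : G →g H, Function.Injective f) ∧ (∃ g : H →g G, Function.Injective g)



namespace Stmt18Aux
open SimpleGraph

variable {V : Type*} {G : SimpleGraph V}

/-- In a tree, any path realizes the distance. -/
lemma length_eq_dist (hG : G.IsTree) {u v : V} (p : G.Walk u v) (hp : p.IsPath) :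
    p.length = G.dist u v := by
  obtain ⟨q, hq, hql⟩ := hG.isConnected.exists_path_of_dist u v
  have h := hG.2.path_unique ⟨p, hp⟩ ⟨q, hq⟩
  have : p = q := congrArg Subtype.val h
  rw [this, hql]

/-- Last step of a geodesic: there is a neighbour of `y` one step closer to `x`. -/
lemma exists_lastStep (hG : G.IsTree) {x y : V} (hxy : x ≠ y) :
    ∃ b, G.Adj y b ∧ G.dist x b + 1 = G.dist x y := by
  classical
  obtain ⟨p, hp, hl⟩ := hG.isConnected.exists_path_of_dist x y
  obtain ⟨b, hadj, q, hq⟩ := Walk.exists_eq_cons_of_ne (Ne.symm hxy) p.reverse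
  have hqp : q.IsPath := by
    have := hp.reverse
    rw [hq] at this
    exact this.of_cons
  have hlen : q.reverse.length = G.dist x b := length_eq_dist hG _ hqp.reverse
  refine ⟨b, hadj, ?_⟩
  have h1 : p.reverse.length = p.length := Walk.length_reverse p
  rw [hq] at h1
  simp only [Walk.length_cons] at h1
  rw [Walk.length_reverse] at hlen
  omega

/-- In a tree the last step is unique. -/
lemma lastStep_unique (hG : G.IsTree) {x y b b' : V} (hb : G.Adj y b) (hb' : G.Adj y b')
    (h1 : G.dist x b + 1 = G.dist x y) (h2 : G.dist x b' + 1 = G.dist x y) : b = b' := by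
  classical
  obtain ⟨Q, hQ, hQl⟩ := hG.isConnected.exists_path_of_dist x b
  obtain ⟨Q', hQ', hQl'⟩ := hG.isConnected.exists_path_of_dist x b'
  have hy : y ∉ Q.support := by
    intro hmem
    have h3 : G.dist x y ≤ (Q.takeUntil y hmem).length := dist_le _
    have h4 := Q.length_takeUntil_le hmem
    omega
  have hy' : y ∉ Q'.support := by
    intro hmem
    have h3 : G.dist x y ≤ (Q'.takeUntil y hmem).length := dist_le _
    have h4 := Q'.length_takeUntil_le hmem
    omega
  have hCpath : (Walk.cons hb Q.reverse).IsPath := by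
    rw [Walk.cons_isPath_iff]
    refine ⟨hQ.reverse, ?_⟩
    rw [Walk.support_reverse, List.mem_reverse]
    exact hy
  have hCpath' : (Walk.cons hb' Q'.reverse).IsPath := by
    rw [Walk.cons_isPath_iff]
    refine ⟨hQ'.reverse, ?_⟩
    rw [Walk.support_reverse, List.mem_reverse]
    exact hy'
  have h := hG.2.path_unique ⟨Walk.cons hb Q.reverse, hCpath⟩ ⟨Walk.cons hb' Q'.reverse, hCpath'⟩
  have hval : Walk.cons hb Q.reverse = Walk.cons hb' Q'.reverse := congrArg Subtype.val h
  have := congrArg (fun w => w.getVert 1) hval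
  simpa [Walk.getVert_cons_succ, Walk.getVert_zero] using this

/-- Distances to the two endpoints of an edge differ by exactly one (in a tree). -/
lemma dist_adj_dichotomy (hG : G.IsTree) (v : V) {x y : V} (hxy : G.Adj x y) :
    G.dist v y = G.dist v x + 1 ∨ G.dist v x = G.dist v y + 1 := by
  classical
  obtain ⟨p, hp, hl⟩ := hG.isConnected.exists_path_of_dist v x
  by_cases hmem : y ∈ p.support
  · right
    have h1 : G.dist v y ≤ (p.takeUntil y hmem).length := dist_le _
    have h2 : G.dist y x ≤ (p.dropUntil y hmem).length := dist_le _
    have h3 : (p.takeUntil y hmem).length + (p.dropUntil y hmem).length = p.length := by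
      conv_rhs => rw [← Walk.take_spec p hmem]
      rw [Walk.length_append]
    have h4 : G.dist v x ≤ G.dist v y + G.dist y x := hG.isConnected.dist_triangle
    have h5 : G.dist y x = 1 := dist_eq_one_iff_adj.mpr hxy.symm
    omega
  · left
    have hc : (p.concat hxy).IsPath := by
      rw [← Walk.isPath_reverse_iff, Walk.reverse_concat, Walk.cons_isPath_iff]
      refine ⟨hp.reverse, ?_⟩
      rw [Walk.support_reverse, List.mem_reverse]
      exact hmem
    have h6 := length_eq_dist hG _ hc
    rw [Walk.length_concat] at h6
    omega

/-- Injective homomorphisms of a tree into itself are isometric. -/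
lemma hom_dist (hG : G.IsTree) (g : G →g G) (hg : Function.Injective g) (u v : V) :
    G.dist (g u) (g v) = G.dist u v := by
  obtain ⟨p, hp, hl⟩ := hG.isConnected.exists_path_of_dist u v
  have h := length_eq_dist hG (p.map g) (Walk.map_isPath_of_injective hg hp)
  rw [Walk.length_map] at h
  omega

/-- Every vertex projects onto a ray. -/
lemma exists_proj (hG : G.IsTree) {r : ℕ → V} (hinj : Function.Injective r)
    (hadj : ∀ n, G.Adj (r n) (r (n + 1))) (v : V) :
    ∃ p, ∀ n, G.dist v (r n) = G.dist v (r p) + Nat.dist p n := by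
  set A : ℕ → ℕ := fun n => G.dist v (r n) with hA
  have dich : ∀ n, A (n + 1) = A n + 1 ∨ A n = A (n + 1) + 1 :=
    fun n => dist_adj_dichotomy hG v (hadj n)
  have noud : ∀ n, A (n + 1) = A n + 1 → A (n + 2) = A (n + 1) + 1 := by
    intro n h
    rcases dich (n + 1) with h2 | h2
    · exact h2
    · exfalso
      have heq : r n = r (n + 2) := by
        refine lastStep_unique hG (x := v) (y := r (n+1)) (hadj n).symm (hadj (n+1)) ?_ ?_
        · show A n + 1 = A (n + 1)
          omega
        · show A (n + 1 + 1) + 1 = A (n + 1)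
          omega
      have := hinj heq
      omega
  have dec : ∀ n, (∀ m < n, A (m + 1) + 1 = A m) → A n + n = A 0 := by
    intro n
    induction n with
    | zero => simp
    | succ k ih =>
      intro h
      have hk := ih (fun m hm => h m (by omega))
      have := h k (by omega)
      omega
  have hex : ∃ n, A (n + 1) = A n + 1 := by
    by_contra hno
    push_neg at hno
    have hall : ∀ m, A (m + 1) + 1 = A m := by
      intro m
      rcases dich m with h | h
      · exact absurd h (hno m)
      · omega
    have := dec (A 0 + 1) (fun m _ => hall m)
    omega
  classical
  set p := Nat.find hex with hpdef
  have hp : A (p + 1) = A p + 1 := Nat.find_spec hex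
  have hlt : ∀ m < p, A (m + 1) + 1 = A m := by
    intro m hm
    rcases dich m with h | h
    · exact absurd h (Nat.find_min hex hm)
    · omega
  have hup : ∀ n, p ≤ n → A (n + 1) = A n + 1 := by
    intro n hn
    induction n with
    | zero =>
      have : p = 0 := by omega
      rw [this] at hp; exact hp
    | succ k ih =>
      rcases Nat.lt_or_ge p (k + 1) with h | h
      · exact noud k (ih (by omega))
      · have : p = k + 1 := by omega
        rw [this] at hp; exact hp
  have hupv : ∀ n, p ≤ n → A n = A p + (n - p) := by
    intro n hn
    induction n with
    | zero =>
      have : p = 0 := by omega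
      simp [this]
    | succ k ih =>
      rcases Nat.lt_or_ge p (k + 1) with h | h
      · have h1 := ih (by omega)
        have h2 := hup k (by omega)
        omega
      · have : p = k + 1 := by omega
        simp [this]
  have hdnv : ∀ m, m ≤ p → A m = A p + (p - m) := by
    have key : ∀ i, i ≤ p → A (p - i) = A p + i := by
      intro i
      induction i with
      | zero => simp
      | succ k ih =>
        intro hk
        have h1 := ih (by omega)
        have h2 := hlt (p - (k + 1)) (by omega)
        have h3 : p - (k + 1) + 1 = p - k := by omega
        rw [h3] at h2
        omega
    intro m hm
    have := key (p - m) (by omega)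
    have h4 : p - (p - m) = m := by omega
    rw [h4] at this
    omega
  refine ⟨p, fun n => ?_⟩
  show A n = A p + Nat.dist p n
  rcases le_or_gt p n with h | h
  · have := hupv n h
    have hd : Nat.dist p n = n - p := Nat.dist_eq_sub_of_le h
    omega
  · have := hdnv n (by omega)
    have hd : Nat.dist p n = p - n := Nat.dist_eq_sub_of_le_right (by omega)
    omega

/-- Rays in trees are geodesic. -/
lemma ray_dist (hG : G.IsTree) {r : ℕ → V} (hinj : Function.Injective r)
    (hadj : ∀ n, G.Adj (r n) (r (n + 1))) (i j : ℕ) :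
    G.dist (r i) (r j) = Nat.dist i j := by
  obtain ⟨p, hp⟩ := exists_proj hG hinj hadj (r i)
  have h0 := hp i
  rw [SimpleGraph.dist_self] at h0
  have h1 : Nat.dist p i = 0 ∧ G.dist (r i) (r p) = 0 := by omega
  have hpi : p = i := by
    have := h1.1
    simp only [Nat.dist] at this
    omega
  have h2 := hp j
  rw [hpi, SimpleGraph.dist_self] at h2
  omega

end Stmt18Aux


section MainProof
open SimpleGraph

/-- Let `f` be a parabolic self-embedding of a locally finite tree with maximal ray
`r`, all of whose branches are nearly finite, such that a tail of `r` (from `t` on)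
is preserved by every self-embedding, and let `s = r i₀` be the `<_f`-minimal vertex
of the ray of degree at least 3. Then each `S_k` is a sibling of `T` and
`T ⊋ S₁ ⊋ S₂ ⊋ ⋯` is a strictly decreasing chain. -/
theorem stmt_18 {V : Type*} (G : SimpleGraph V)
    (hG : G.IsTree) [∀ v, Fintype (G.neighborSet v)]
    (f : G →g G) (hf : Function.Injective f) (hpar : Parabolic G f)
    (r : ℕ → V) (hmax : IsMaxPreservedRay G f r)
    (hnf : ∀ i, {v ∈ BranchAt G r i | 3 ≤ G.degree v}.Finite)
    (t : ℕ)
    (hray : ∀ g : G →g G, Function.Injective g →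
      ∀ j, t ≤ j → ∃ j', t ≤ j' ∧ g (r j) = r j')
    (i₀ : ℕ) (hdeg : 3 ≤ G.degree (r i₀))
    (hmin : ∀ i < i₀, G.degree (r i) < 3) :
    (∀ k, 1 ≤ k → Equimorphic G (G.induce (SkSet G ⇑f r (r i₀) k))) ∧
    (∀ k, 1 ≤ k → SkSet G ⇑f r (r i₀) (k + 1) ⊂ SkSet G ⇑f r (r i₀) k) ∧
    SkSet G ⇑f r (r i₀) 1 ⊂ Set.univ := by
  classical
  obtain ⟨⟨hrinj, hradj⟩, hss, hmaxr⟩ := hmax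
  have hconn := hG.isConnected
  have hrd : ∀ i j, G.dist (r i) (r j) = Nat.dist i j := Stmt18Aux.ray_dist hG hrinj hradj
  -- the shift `d` of `f` along the ray
  have hrmem : ∀ n, f (r n) ∈ Set.range r := fun n => hss.subset ⟨r n, ⟨n, rfl⟩, rfl⟩
  choose σ hσ using hrmem
  have hσadj : ∀ n, G.Adj (r (σ n)) (r (σ (n + 1))) := by
    intro n; rw [hσ n, hσ (n + 1)]; exact f.map_adj (hradj n)
  have hσd : ∀ n, Nat.dist (σ n) (σ (n + 1)) = 1 := by
    intro n
    have h := dist_eq_one_iff_adj.mpr (hσadj n)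
    rwa [hrd] at h
  have hσinj : Function.Injective σ := by
    intro a b h
    apply hrinj
    apply hf
    rw [← hσ a, ← hσ b, h]
  have hstep : ∀ n, σ (n + 1) = σ n + 1 := by
    intro n
    have h1 := hσd n
    have h1' : σ (n + 1) = σ n + 1 ∨ σ n = σ (n + 1) + 1 := by
      simp only [Nat.dist] at h1; omega
    rcases h1' with h | h
    · exact h
    · exfalso
      have hdesc : ∀ k, σ (n + k + 1) + 1 = σ (n + k) := by
        intro k
        induction k with
        | zero => simpa using h.symm
        | succ m ih =>
          have h2 := hσd (n + m + 1)
          rw [show n + m + 1 + 1 = n + m + 2 from rfl] at h2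
          have h2' : σ (n + m + 2) = σ (n + m + 1) + 1 ∨ σ (n + m + 1) = σ (n + m + 2) + 1 := by
            simp only [Nat.dist] at h2; omega
          rcases h2' with h3 | h3
          · exfalso
            have h4 : σ (n + m + 2) = σ (n + m) := by omega
            have := hσinj h4
            omega
          · have e : n + (m + 1) + 1 = n + m + 2 := by omega
            have e2 : n + (m + 1) = n + m + 1 := by omega
            rw [e, e2]; omega
      have hsum : ∀ k, σ (n + k) + k = σ n := by
        intro k
        induction k with
        | zero => simp
        | succ m ih =>
          have h5 := hdesc m
          have e : n + (m + 1) = n + m + 1 := by omega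
          rw [e]; omega
      have := hsum (σ n + 1)
      omega
  have hσlin : ∀ n, σ n = σ 0 + n := by
    intro n
    induction n with
    | zero => simp
    | succ m ih => rw [hstep m, ih]; omega
  set d := σ 0 with hddef
  have hd : ∀ n, f (r n) = r (n + d) := by
    intro n; rw [← hσ n, hσlin n]; congr 1; omega
  have hd1 : 1 ≤ d := by
    by_contra hcon
    have hd0 : ∀ n, f (r n) = r n := by
      intro n; rw [hd n]; congr 1; omega
    exact hss.not_subset (fun y hy => by
      obtain ⟨n, rfl⟩ := hy
      exact ⟨r n, ⟨n, rfl⟩, hd0 n⟩)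
  -- iterates
  have hdj : ∀ (j n : ℕ), (⇑f)^[j] (r n) = r (n + j * d) := by
    intro j
    induction j with
    | zero => intro n; simp
    | succ m ih =>
      intro n
      rw [Function.iterate_succ_apply, hd n, ih (n + d)]
      congr 1; ring
  have hitinj : ∀ j : ℕ, Function.Injective ((⇑f)^[j]) := fun j => hf.iterate j
  have hithom : ∀ (j : ℕ) {u w : V}, G.Adj u w → G.Adj ((⇑f)^[j] u) ((⇑f)^[j] w) := by
    intro j
    induction j with
    | zero => intro u w h; simpa using h
    | succ m ih =>
      intro u w h
      rw [Function.iterate_succ_apply, Function.iterate_succ_apply]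
      exact ih (f.map_adj h)
  -- projections onto the ray
  choose P hP using fun v => Stmt18Aux.exists_proj hG hrinj hradj v
  have hPuniq : ∀ v p, (∀ n, G.dist v (r n) = G.dist v (r p) + Nat.dist p n) → p = P v := by
    intro v p h
    have h1 := h (P v)
    have h2 := hP v p
    simp only [Nat.dist] at h1 h2
    omega
  have hBranch : ∀ (q : ℕ) (u : V), u ∈ BranchAtVtx G r (r q) ↔
      ∀ n, G.dist u (r n) = G.dist u (r q) + Nat.dist q n := by
    intro q u
    simp only [BranchAtVtx, Set.mem_setOf_eq]
    constructor
    · intro h n; have := h n; rwa [hrd q n] at this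
    · intro h n; have := h n; rwa [← hrd q n] at this
  have hPoff : ∀ v, v ∉ Set.range r → 1 ≤ G.dist v (r (P v)) := by
    intro v hv
    by_contra hcon
    have h0 : G.dist v (r (P v)) = 0 := by omega
    exact hv ⟨P v, (hconn.dist_eq_zero_iff.mp h0).symm⟩
  have hbranch_off : ∀ q u, u ∈ BranchAtVtx G r (r q) → u ≠ r q → u ∉ Set.range r := by
    intro q u hB hne
    rintro ⟨n, rfl⟩
    have h1 := (hBranch q (r n)).mp hB n
    have h2 := hrd n q
    simp only [SimpleGraph.dist_self, Nat.dist] at h1 h2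
    have h3 : n = q := by omega
    exact hne (by rw [h3])
  -- off-ray vertices have an off-ray neighbour at their projection
  have hnbr : ∀ v, v ∉ Set.range r → ∃ b, G.Adj (r (P v)) b ∧
      G.dist v b + 1 = G.dist v (r (P v)) ∧ b ∉ Set.range r := by
    intro v hv
    have hne : v ≠ r (P v) := fun h => hv ⟨P v, h.symm⟩
    obtain ⟨b, hb, hbd⟩ := Stmt18Aux.exists_lastStep hG hne
    refine ⟨b, hb, hbd, ?_⟩
    rintro ⟨n, rfl⟩
    have h1 := hP v n
    have h2 := hPoff v hv
    simp only [Nat.dist] at h1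
    omega
  have hdeg3 : ∀ v, v ∉ Set.range r → 1 ≤ P v → 3 ≤ G.degree (r (P v)) := by
    intro v hv h1
    obtain ⟨b, hb, _, hboff⟩ := hnbr v hv
    have ha1 : G.Adj (r (P v)) (r (P v - 1)) := by
      have e : P v - 1 + 1 = P v := by omega
      have h2 := (hradj (P v - 1)).symm
      rwa [e] at h2
    have ha2 : G.Adj (r (P v)) (r (P v + 1)) := hradj (P v)
    have hsub : ({r (P v - 1), r (P v + 1), b} : Finset V) ⊆ G.neighborFinset (r (P v)) := by
      intro z hz
      simp only [Finset.mem_insert, Finset.mem_singleton] at hz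
      rw [SimpleGraph.mem_neighborFinset]
      rcases hz with rfl | rfl | rfl
      · exact ha1
      · exact ha2
      · exact hb
    have hcard : ({r (P v - 1), r (P v + 1), b} : Finset V).card = 3 := by
      rw [Finset.card_insert_of_notMem, Finset.card_insert_of_notMem, Finset.card_singleton]
      · simp only [Finset.mem_singleton]
        exact fun h => hboff ⟨P v + 1, h⟩
      · simp only [Finset.mem_insert, Finset.mem_singleton]
        push_neg
        constructor
        · intro h; have := hrinj h; omega
        · intro h; exact hboff ⟨P v - 1, h⟩
    calc 3 = ({r (P v - 1), r (P v + 1), b} : Finset V).card := hcard.symm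
      _ ≤ (G.neighborFinset (r (P v))).card := Finset.card_le_card hsub
      _ = G.degree (r (P v)) := rfl
  have hPge : ∀ v, v ∉ Set.range r → 1 ≤ P v → i₀ ≤ P v := by
    intro v hv h1
    by_contra hcon
    have h2 := hmin (P v) (by omega)
    have h3 := hdeg3 v hv h1
    omega
  -- the key distance identity
  have hE : ∀ (x : V) (n : ℕ), G.dist (f x) (r (n + d)) = G.dist x (r n) := by
    intro x n
    rw [← hd n]
    exact Stmt18Aux.hom_dist hG f hf x (r n)
  -- transition of projections under f
  have htrans : ∀ x : V, x ∉ Set.range r → f x ∉ Set.range r →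
      (1 ≤ P x → P (f x) = P x + d) ∧ (P x = 0 → P (f x) = d) := by
    intro x hx hfx
    have hE2 : ∀ n, G.dist (f x) (r (P (f x))) + Nat.dist (P (f x)) (n + d)
        = G.dist x (r (P x)) + Nat.dist (P x) n := by
      intro n
      have h1 := hP (f x) (n + d)
      have h2 := hP x n
      have h3 := hE x n
      omega
    have hc := hPoff (f x) hfx
    have hA := hPoff x hx
    constructor
    · intro hp1
      have e0 := hE2 0
      have e1 := hE2 (P x)
      have e2 := hE2 (P (f x) - d)
      have e3 := hE2 (P (f x) + P x + d + 1)
      simp only [Nat.dist] at e0 e1 e2 e3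
      omega
    · intro hp0
      have hmd : P (f x) ≤ d := by
        have e0 := hE2 0
        have e3 := hE2 (P (f x) + d + 1)
        simp only [Nat.dist] at e0 e3
        omega
      rcases Nat.lt_or_ge (P (f x)) d with hlt | hge
      swap
      · omega
      exfalso
      have hxne : x ≠ r 0 := by rintro rfl; exact hx ⟨0, rfl⟩
      obtain ⟨b, hb, hbd⟩ := Stmt18Aux.exists_lastStep hG hxne
      have hboff : b ∉ Set.range r := by
        rintro ⟨n, rfl⟩
        have h1 := hP x n
        rw [hp0] at h1
        simp only [Nat.dist] at h1
        omega
      have hfb : f b = r (d - 1) := by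
        refine Stmt18Aux.lastStep_unique hG (x := f x) (y := r d) ?_ ?_ ?_ ?_
        · have h1 := f.map_adj hb
          rwa [hd 0, Nat.zero_add] at h1
        · have e : d - 1 + 1 = d := by omega
          have h2 := hradj (d - 1)
          rw [e] at h2
          exact h2.symm
        · have h1 : G.dist (f x) (f b) = G.dist x b := Stmt18Aux.hom_dist hG f hf x b
          have h2 : G.dist (f x) (r d) = G.dist x (r 0) := by
            have := hE x 0; rwa [Nat.zero_add] at this
          omega
        · have h1 := hP (f x) (d - 1)
          have h2 := hP (f x) d
          simp only [Nat.dist] at h1 h2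
          omega
      set ρ : ℕ → V := fun n => Nat.rec b (fun k _ => r k) n with hρdef
      have hρ0 : ρ 0 = b := rfl
      have hρs : ∀ k, ρ (k + 1) = r k := fun k => rfl
      have hρray : IsRay G ρ := by
        constructor
        · intro a a' h
          match a, a' with
          | 0, 0 => rfl
          | 0, (k+1) => rw [hρ0, hρs] at h; exact absurd ⟨k, h.symm⟩ hboff
          | (k+1), 0 => rw [hρ0, hρs] at h; exact absurd ⟨k, h⟩ hboff
          | (k+1), (l+1) =>
            rw [hρs, hρs] at h
            have := hrinj h
            omega
        · intro n
          match n with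
          | 0 => rw [hρ0, hρs]; exact hb.symm
          | (k+1) => rw [hρs, hρs]; exact hradj k
      have hρsub : ⇑f '' Set.range ρ ⊆ Set.range ρ := by
        rintro _ ⟨_, ⟨n, rfl⟩, rfl⟩
        match n with
        | 0 =>
          refine ⟨d, ?_⟩
          have e : d = (d - 1) + 1 := by omega
          rw [hρ0, hfb]
          conv_lhs => rw [e]
        | (k+1) =>
          refine ⟨k + d + 1, ?_⟩
          rw [hρs, hρs, hd k]
      exact hboff (hmaxr ρ hρray hρsub ⟨0, hρ0⟩)
  -- membership criterion for SkSet
  have hSk_iff : ∀ (K : ℕ) (u : V), u ∈ SkSet G ⇑f r (r i₀) K ↔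
      ∀ j, 1 ≤ j → j ≤ K → u ∈ BranchAtVtx G r (r (i₀ + j * d)) → u = r (i₀ + j * d) := by
    intro K u
    constructor
    · intro h j h1 h2 hB
      by_contra hne
      exact h (Set.mem_iUnion.mpr ⟨j, Set.mem_iUnion.mpr
        ⟨Finset.mem_Icc.mpr ⟨h1, h2⟩, by rw [hdj j i₀]; exact ⟨hB, hne⟩⟩⟩)
    · intro h hmem
      obtain ⟨j, hj⟩ := Set.mem_iUnion.mp hmem
      obtain ⟨hjIcc, hju⟩ := Set.mem_iUnion.mp hj
      rw [hdj j i₀] at hju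
      obtain ⟨h1, h2⟩ := Finset.mem_Icc.mp hjIcc
      exact hju.2 (h j h1 h2 hju.1)
  -- image of f^[k+2] lies in SkSet
  have hmemSk : ∀ (k : ℕ) (v : V), (⇑f)^[k + 2] v ∈ SkSet G ⇑f r (r i₀) k := by
    intro k v
    rw [hSk_iff]
    intro j hj1 hjk hB
    by_contra hne
    have hwoff : (⇑f)^[k + 2] v ∉ Set.range r := hbranch_off _ _ hB hne
    have hPw : P ((⇑f)^[k + 2] v) = i₀ + j * d :=
      (hPuniq _ _ ((hBranch _ _).mp hB)).symm
    have hoffall : ∀ i, i ≤ k + 2 → (⇑f)^[i] v ∉ Set.range r := by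
      intro i hi
      rintro ⟨n, hn⟩
      apply hwoff
      have he : (⇑f)^[k + 2] v = (⇑f)^[k + 2 - i] ((⇑f)^[i] v) := by
        rw [← Function.iterate_add_apply]
        congr 1
        omega
      rw [he, ← hn, hdj]
      exact ⟨_, rfl⟩
    have hchain : ∀ i, i < k + 2 →
        (1 ≤ P ((⇑f)^[i] v) → P ((⇑f)^[i + 1] v) = P ((⇑f)^[i] v) + d) ∧
        (P ((⇑f)^[i] v) = 0 → P ((⇑f)^[i + 1] v) = d) := by
      intro i hi
      have h1 := hoffall i (by omega)
      have h2 := hoffall (i + 1) (by omega)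
      have e := Function.iterate_succ_apply' (⇑f) i v
      have h2' : f ((⇑f)^[i] v) ∉ Set.range r := by
        rw [← e]; exact h2
      have h3 := htrans ((⇑f)^[i] v) h1 h2'
      rw [← e] at h3
      exact h3
    have hj' : j * d ≤ k * d := Nat.mul_le_mul_right d hjk
    have he2 : (k + 1) * d = k * d + d := by ring
    rcases Nat.eq_zero_or_pos (P v) with h0 | h1
    · have hP1 : P ((⇑f)^[1] v) = d := by
        have hc := (hchain 0 (by omega)).2
        simp only [Function.iterate_zero_apply, Nat.zero_add] at hc
        exact hc h0
      have hgrow : ∀ i, i ≤ k + 1 → P ((⇑f)^[i + 1] v) = d + i * d := by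
        intro i
        induction i with
        | zero => intro _; simpa using hP1
        | succ m ih =>
          intro hm
          have hmv := ih (by omega)
          have hge1 : 1 ≤ P ((⇑f)^[m + 1] v) := by
            rw [hmv]; omega
          have hc := (hchain (m + 1) (by omega)).1 hge1
          rw [hc, hmv]; ring
      have hfin := hgrow (k + 1) le_rfl
      rw [show k + 1 + 1 = k + 2 from rfl] at hfin
      have hoff1 : (⇑f)^[1] v ∉ Set.range r := hoffall 1 (by omega)
      have hi0d : i₀ ≤ d := by
        have h4 := hPge ((⇑f)^[1] v) hoff1 (by rw [hP1]; omega)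
        rwa [hP1] at h4
      omega
    · have hoff0 : v ∉ Set.range r := by
        have := hoffall 0 (by omega); simpa using this
      have hPv1 : 1 ≤ P v := h1
      have hP0 : i₀ ≤ P v := hPge v hoff0 hPv1
      have hgrow : ∀ i, i ≤ k + 2 → P ((⇑f)^[i] v) = P v + i * d := by
        intro i
        induction i with
        | zero => intro _; simp
        | succ m ih =>
          intro hm
          have hmv := ih (by omega)
          have hge1 : 1 ≤ P ((⇑f)^[m] v) := by rw [hmv]; omega
          have hc := (hchain m (by omega)).1 hge1
          rw [hc, hmv]; ring
      have hfin := hgrow (k + 2) le_rfl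
      have he3 : (k + 2) * d = k * d + d + d := by ring
      omega
  -- witnesses for strictness
  have hwit : ∀ j : ℕ, 1 ≤ j → ∃ u : V, u ∈ BranchAtVtx G r (r (i₀ + j * d)) ∧
      u ≠ r (i₀ + j * d) ∧ P u = i₀ + j * d := by
    intro j hj
    have hq1 : 1 ≤ i₀ + j * d := by
      have : 1 * 1 ≤ j * d := Nat.mul_le_mul hj hd1
      omega
    obtain ⟨u₀, hu₀m, hu₀off⟩ : ∃ u₀, u₀ ∈ G.neighborFinset (r i₀) ∧ (⇑f)^[j] u₀ ∉ Set.range r := by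
      by_contra hcon
      push_neg at hcon
      have himg : (G.neighborFinset (r i₀)).image ((⇑f)^[j]) ⊆
          {r (i₀ + j * d - 1), r (i₀ + j * d + 1)} := by
        intro z hz
        simp only [Finset.mem_image] at hz
        obtain ⟨u₀, hu₀m, rfl⟩ := hz
        have hadj0 : G.Adj (r i₀) u₀ := (SimpleGraph.mem_neighborFinset _ _ _).mp hu₀m
        obtain ⟨n, hn⟩ := hcon u₀ hu₀m
        have hadj1 : G.Adj (r (i₀ + j * d)) (r n) := by
          have h5 := hithom j hadj0
          rwa [hdj j i₀, ← hn] at h5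
        have hdist1 : Nat.dist (i₀ + j * d) n = 1 := by
          have h6 := dist_eq_one_iff_adj.mpr hadj1
          rwa [hrd] at h6
        simp only [Finset.mem_insert, Finset.mem_singleton]
        rw [← hn]
        simp only [Nat.dist] at hdist1
        have h7 : n + 1 = i₀ + j * d ∨ n = i₀ + j * d + 1 := by omega
        rcases h7 with h | h
        · exact Or.inl (congrArg r (by omega : n = i₀ + j * d - 1))
        · exact Or.inr (congrArg r (by omega : n = i₀ + j * d + 1))
      have h3 : 3 ≤ ((G.neighborFinset (r i₀)).image ((⇑f)^[j])).card := by
        rw [Finset.card_image_of_injective _ (hitinj j)]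
        exact hdeg
      have h2 : ({r (i₀ + j * d - 1), r (i₀ + j * d + 1)} : Finset V).card ≤ 2 := by
        apply le_trans (Finset.card_insert_le _ _)
        simp
      have h4 := Finset.card_le_card himg
      omega
    have hadj0 : G.Adj (r i₀) u₀ := (SimpleGraph.mem_neighborFinset _ _ _).mp hu₀m
    have hadj1 : G.Adj (r (i₀ + j * d)) ((⇑f)^[j] u₀) := by
      have h5 := hithom j hadj0
      rwa [hdj j i₀] at h5
    have hdu : G.dist ((⇑f)^[j] u₀) (r (i₀ + j * d)) = 1 := by
      rw [SimpleGraph.dist_comm]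
      exact dist_eq_one_iff_adj.mpr hadj1
    have hPu : P ((⇑f)^[j] u₀) = i₀ + j * d := by
      have h1 := hP ((⇑f)^[j] u₀) (i₀ + j * d)
      have h2 := hPoff ((⇑f)^[j] u₀) hu₀off
      simp only [Nat.dist] at h1
      omega
    refine ⟨(⇑f)^[j] u₀, ?_, ?_, hPu⟩
    · rw [hBranch]
      intro n
      have h1 := hP ((⇑f)^[j] u₀) n
      rwa [hPu] at h1
    · intro h
      rw [h] at hdu
      simp [SimpleGraph.dist_self] at hdu
  -- assembling the three goals
  refine ⟨?_, ?_, ?_⟩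
  · intro k _
    constructor
    · refine ⟨⟨fun v => ⟨(⇑f)^[k + 2] v, hmemSk k v⟩, fun {a b} hab => ?_⟩,
        fun a b hab => hitinj (k + 2) (congrArg Subtype.val hab)⟩
      exact hithom (k + 2) hab
    · exact ⟨⟨Subtype.val, fun {a b} hab => hab⟩, Subtype.val_injective⟩
  · intro k _
    rw [ssubset_iff_subset_not_subset]
    constructor
    · intro u hu
      rw [hSk_iff] at hu ⊢
      intro j h1 h2 hB
      exact hu j h1 (by omega) hB
    · intro hcon
      obtain ⟨u, huB, hune, hPu⟩ := hwit (k + 1) (by omega)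
      have huSk : u ∈ SkSet G ⇑f r (r i₀) k := by
        rw [hSk_iff]
        intro j h1 h2 hB
        by_contra hne2
        have h5 := (hPuniq u _ ((hBranch _ u).mp hB)).symm
        have hj' : j * d ≤ k * d := Nat.mul_le_mul_right d h2
        have he2 : (k + 1) * d = k * d + d := by ring
        omega
      have h6 := hcon huSk
      rw [hSk_iff] at h6
      exact hune (h6 (k + 1) (by omega) le_rfl huB)
  · rw [Set.ssubset_univ_iff]
    intro hcon
    obtain ⟨u, huB, hune, hPu⟩ := hwit 1 (by omega)
    have h7 : u ∈ SkSet G ⇑f r (r i₀) 1 := by rw [hcon]; trivial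
    rw [hSk_iff] at h7
    exact hune (h7 1 le_rfl le_rfl huB)

end MainProof
end
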